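/- Let A, B be coprime integers with B > 0 and let q be a positive integer. Then the number of p in {0,1,...,q-1} with gcd(Bp+A, q) = 1 equals φ(q) · ∏_{p prime, p | gcd(q,B)} (1 + 1/(p-1)), where φ is Euler's totient function. -/

import Mathlib

/-!
Split `q = a * b` with `a ∣ B ^ k` for some `k` and `b` coprime to `B`.
Since `gcd(A, B) = 1`, the number `Bp + A` is always coprime to `a`, so the condition only sees
`b`; it is then `b`-periodic in `p`, and on one period `p ↦ Bp + A` permutes `ZMod b`, so it
hits exactly `φ(b)` units. Hence the count is `a φ(b)`, and `φ(q) = φ(a) φ(b)` together with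
`φ(a) ∏_{p ∣ a} p / (p - 1) = a` gives the formula, as `a` and `gcd(q, B)` share their prime factors.
-/

open Finset

namespace Nat

theorem count_mul_of_periodic {p : ℕ → Prop} [DecidablePred p] {n : ℕ}
    (hp : Function.Periodic p n) (k : ℕ) : count p (k * n) = k * count p n := by
  induction k with
  | zero => simp
  | succ k ih =>
    have hshift : count (fun j => p (k * n + j)) n = count p n := by
      have hkn : Function.Periodic p (k * n) := by simpa using hp.nat_mul k
      simp only [add_comm (k * n), show ∀ j, p (j + k * n) = p j from hkn]
    rw [add_mul, one_mul, count_add, ih, hshift, add_mul, one_mul]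

theorem exists_mul_eq_dvd_pow_coprime (m : ℕ) {n : ℕ} (hn : n ≠ 0) :
    ∃ a b k, a * b = n ∧ a ∣ m ^ k ∧ b.Coprime m := by
  induction n using induction_on_primes with
  | zero => exact absurd rfl hn
  | one => exact ⟨1, 1, 0, rfl, one_dvd _, coprime_one_left m⟩
  | prime_mul p n hp ih =>
    obtain ⟨a, b, k, rfl, ha, hb⟩ := ih (right_ne_zero_of_mul hn)
    by_cases hpm : p ∣ m
    · exact ⟨p * a, b, k + 1, by ring, by rw [pow_succ']; exact mul_dvd_mul hpm ha, hb⟩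
    · exact ⟨a, p * b, k, by ring, ha, (hp.coprime_iff_not_dvd.2 hpm).mul_left hb⟩

theorem primeFactors_gcd_mul_eq_of_dvd_pow {a b m k : ℕ} (hab : a * b ≠ 0)
    (ha : a ∣ m ^ k) (hb : b.Coprime m) : (gcd (a * b) m).primeFactors = a.primeFactors := by
  ext p
  simp only [mem_primeFactors, dvd_gcd_iff, ne_eq, gcd_eq_zero_iff, hab,
    false_and, not_false_eq_true, and_true, left_ne_zero_of_mul hab]
  constructor
  · rintro ⟨hp, hpab, hpm⟩
    refine ⟨hp, (hp.dvd_mul.1 hpab).resolve_right fun hpb => hp.one_lt.ne' ?_⟩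
    exact dvd_one.1 (hb ▸ dvd_gcd hpb hpm)
  · rintro ⟨hp, hpa⟩
    exact ⟨hp, dvd_mul_of_dvd_left hpa b, hp.dvd_of_dvd_pow (hpa.trans ha)⟩

theorem totient_mul_prod_one_add_inv_sub_one (n : ℕ) :
    (φ n : ℝ) * ∏ p ∈ n.primeFactors, (1 + 1 / ((p : ℝ) - 1)) = n := by
  have htot := congrArg (Rat.cast : ℚ → ℝ) (totient_eq_mul_prod_factors n)
  push_cast at htot
  rw [htot, mul_assoc, ← prod_mul_distrib, prod_eq_one, mul_one]
  intro p hp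
  have hp1 : (1 : ℝ) < p := by exact_mod_cast (prime_of_mem_primeFactors hp).one_lt
  have hp0 : (p : ℝ) ≠ 0 := by positivity
  have hp1' : (p : ℝ) - 1 ≠ 0 := by linarith
  field_simp
  ring

end Nat

namespace ZMod

theorem card_filter_range_natCast (n : ℕ) [NeZero n] (P : ZMod n → Prop) [DecidablePred P] :
    #((range n).filter fun k : ℕ => P k) = #{x : ZMod n | P x} := by
  refine card_nbij' Nat.cast val (fun k hk => ?_) (fun x hx => ?_) (fun k hk => ?_) (fun x _ => ?_)
  · simpa using (mem_filter.1 hk).2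
  · simpa using ⟨val_lt x, (mem_filter.1 hx).2⟩
  · exact val_cast_of_lt (mem_range.1 (mem_filter.1 hk).1)
  · exact natCast_zmod_val x

end ZMod

theorem card_filter_range_isCoprime_mul_add (n : ℕ) {a b : ℤ} (hb : IsCoprime b n) :
    #((range n).filter fun k : ℕ => IsCoprime (b * k + a) n) = n.totient := by
  rcases eq_or_ne n 0 with rfl | hn
  · simp
  have : NeZero n := ⟨hn⟩
  obtain ⟨u, hu⟩ := (ZMod.coe_int_isUnit_iff_isCoprime b n).2 hb.symm
  let affine : ZMod n ≃ ZMod n := (Units.mulLeft u).trans (Equiv.addRight (a : ZMod n))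
  calc #((range n).filter fun k : ℕ => IsCoprime (b * k + a) n)
      = #((range n).filter fun k : ℕ => IsUnit (affine k)) := by
        congr 1
        refine filter_congr fun k _ => ?_
        rw [isCoprime_comm, ← ZMod.coe_int_isUnit_iff_isCoprime]
        push_cast
        rw [← hu]
        rfl
    _ = #{x : ZMod n | IsUnit (affine x)} :=
        ZMod.card_filter_range_natCast n (fun x => IsUnit (affine x))
    _ = #{x : ZMod n | IsUnit x} := card_equiv affine (by simp)
    _ = #((range n).filter fun k : ℕ => IsUnit (k : ZMod n)) :=
        (ZMod.card_filter_range_natCast n (IsUnit : ZMod n → Prop)).symm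
    _ = n.totient := by
        simp only [ZMod.isUnit_iff_coprime, Nat.coprime_comm]
        rfl

theorem card_filter_range_isCoprime_mul_add_of_dvd_pow {A B : ℤ} (hAB : IsCoprime A B)
    {a b k : ℕ} (ha : (a : ℤ) ∣ B ^ k) (hb : IsCoprime B b) :
    #((range (a * b)).filter fun p : ℕ => IsCoprime (B * p + A) ((a * b : ℕ) : ℤ)) =
      a * b.totient := by
  have hcond : ∀ p : ℕ, IsCoprime (B * p + A) ((a * b : ℕ) : ℤ) ↔ IsCoprime (B * p + A) b := by
    intro p
    have hxB : IsCoprime (B * p + A) B := by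
      rw [add_comm, mul_comm]
      exact hAB.add_mul_right_left _
    rw [Nat.cast_mul, IsCoprime.mul_right_iff]
    exact and_iff_right (hxB.pow_right.of_isCoprime_of_dvd_right ha)
  have hper : Function.Periodic (fun p : ℕ => IsCoprime (B * p + A) b) b := by
    intro p
    show IsCoprime (B * ((p + b : ℕ) : ℤ) + A) b = IsCoprime (B * p + A) b
    rw [Nat.cast_add, mul_add, add_right_comm, IsCoprime.add_mul_right_left_iff]
  rw [filter_congr fun p _ => hcond p, ← Nat.count_eq_card_filter_range,
    Nat.count_mul_of_periodic hper, Nat.count_eq_card_filter_range,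
    card_filter_range_isCoprime_mul_add b hb]

theorem card_coprime_shifted_residues_totient_general (A B : ℤ) (hAB : IsCoprime A B)
    (q : ℕ) (hq : 0 < q) :
    (((Finset.range q).filter
        (fun p : ℕ => Int.gcd (B * (p : ℤ) + A) (q : ℤ) = 1)).card : ℝ)
      = (Nat.totient q : ℝ) * ∏ p ∈ (Nat.gcd q B.natAbs).primeFactors,
          (1 + 1 / ((p : ℝ) - 1)) := by
  obtain ⟨a, b, k, rfl, ha, hb⟩ := Nat.exists_mul_eq_dvd_pow_coprime B.natAbs hq.ne'
  have haB : (a : ℤ) ∣ B ^ k := Int.natCast_dvd.2 (by rwa [Int.natAbs_pow])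
  have hBb : IsCoprime B b := by
    rw [Int.isCoprime_iff_gcd_eq_one, Int.gcd_eq_natAbs]
    exact hb.symm
  simp only [← Int.isCoprime_iff_gcd_eq_one]
  rw [card_filter_range_isCoprime_mul_add_of_dvd_pow hAB haB hBb,
    Nat.totient_mul ((hb.pow_right k).coprime_dvd_right ha).symm,
    Nat.primeFactors_gcd_mul_eq_of_dvd_pow hq.ne' ha hb]
  push_cast
  rw [mul_right_comm, Nat.totient_mul_prod_one_add_inv_sub_one]

/-- For coprime integers `A, B` with `B > 0` and a positive integer `q`, the number of
`p ∈ {0, …, q-1}` with `gcd(Bp+A, q) = 1` equals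
`φ(q) · ∏_{p prime, p ∣ gcd(q,B)} (1 + 1/(p-1))`. -/
theorem card_coprime_shifted_residues_totient (A B : ℤ) (hAB : IsCoprime A B) (hB : 0 < B)
    (q : ℕ) (hq : 0 < q) :
    (((Finset.range q).filter
        (fun p : ℕ => Int.gcd (B * (p : ℤ) + A) (q : ℤ) = 1)).card : ℝ)
      = (Nat.totient q : ℝ) * ∏ p ∈ (Nat.gcd q B.natAbs).primeFactors,
          (1 + 1 / ((p : ℝ) - 1)) :=
  card_coprime_shifted_residues_totient_general A B hAB q hq
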